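/- In the situation of the coordinate change u = z − q with q ∈ 𝕂[x₁,…,xₙ] a nonzero homogeneous polynomial of positive degree: if c!·deg q ≥ o, then o₁ ≥ o. Here J ⊆ R = 𝕂[[z,x₁,…,xₙ]] is an ideal of order c with 1 ≤ c < ∞, o = ord coeff_{V(z)}(J) and o₁ = ord coeff_{V(u)}(J). -/

import Mathlib

set_option synthInstance.maxHeartbeats 400000
set_option maxHeartbeats 1000000

noncomputable section

/-- The order of an element `g` with respect to an ideal `I`:  `sup {k : ℕ | g ∈ I ^ k}`,
with value in `ℕ∞` (so that the order of `0` is `⊤`). -/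
def elemOrd {A : Type*} [CommRing A] (I : Ideal A) (g : A) : ℕ∞ :=
  sSup ((fun k : ℕ => (k : ℕ∞)) '' {k : ℕ | g ∈ I ^ k})

/-- The order of an ideal `J` with respect to an ideal `I`: `sup {k : ℕ | J ⊆ I ^ k}`. -/
def idealOrd {A : Type*} [CommRing A] (I J : Ideal A) : ℕ∞ :=
  sSup ((fun k : ℕ => (k : ℕ∞)) '' {k : ℕ | J ≤ I ^ k})

/-- The coefficient ideal `K = coeff_{V(z)}(J) = Σ_{i<c} (f_i : f ∈ J)^{c!/(c−i)}` of an ideal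
`J ⊆ R = 𝕂[[z,x₁,…,xₙ]] = Q[[z]]` with respect to the hypersurface `V(z)`, an ideal of
`Q = 𝕂[[x₁,…,xₙ]]`. -/
def coeffIdeal {𝕂 : Type*} [Field 𝕂] {n : ℕ}
    (J : Ideal (PowerSeries (MvPowerSeries (Fin n) 𝕂))) (c : ℕ) :
    Ideal (MvPowerSeries (Fin n) 𝕂) :=
  ∑ i ∈ Finset.range c,
    (Ideal.span ((PowerSeries.coeff (R := MvPowerSeries (Fin n) 𝕂) i) '' J)) ^ (c.factorial / (c - i))

/-- The coefficient ideal `K₁ = coeff_{V(u)}(J) = Σ_{i<c} (f̃_i : f ∈ J)^{c!/(c−i)}` of `J`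
with respect to `V(u)`, computed from a function `E` assigning to each `f ∈ R` the family of
coefficients of its `u`-expansion. -/
def coeffIdealE {𝕂 : Type*} [Field 𝕂] {n : ℕ}
    (E : PowerSeries (MvPowerSeries (Fin n) 𝕂) → ℕ → MvPowerSeries (Fin n) 𝕂)
    (J : Ideal (PowerSeries (MvPowerSeries (Fin n) 𝕂))) (c : ℕ) :
    Ideal (MvPowerSeries (Fin n) 𝕂) :=
  ∑ i ∈ Finset.range c, (Ideal.span ((fun f => E f i) '' J)) ^ (c.factorial / (c - i))

/-- An element `f = Σ_{i≥0} f_i z^i` of `R = Q[[z]]` is `z`-regular of order `c` if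
`f_i(0) = 0` for all `i < c` and `f_c(0) ≠ 0`. -/
def zRegular {𝕂 : Type*} [Field 𝕂] {n : ℕ}
    (f : PowerSeries (MvPowerSeries (Fin n) 𝕂)) (c : ℕ) : Prop :=
  (∀ i < c, MvPowerSeries.constantCoeff (σ := Fin n) (R := 𝕂)
      (PowerSeries.coeff (R := MvPowerSeries (Fin n) 𝕂) i f) = 0) ∧
    MvPowerSeries.constantCoeff (σ := Fin n) (R := 𝕂)
      (PowerSeries.coeff (R := MvPowerSeries (Fin n) 𝕂) c f) ≠ 0

/-!
Write `f ∈ J` as `f = ∑_{i<c} f̃ᵢ uⁱ + u^c g`. Since `u = z - q` with `q ∈ m^d`, the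
`zʲ`-coefficient of `uⁱ` is `1` for `i = j`, `0` for `i < j`, and lies in `m^{d(i-j)}` for
`i > j`, so `f̃ⱼ = fⱼ - ∑_{i>j} f̃ᵢ (uⁱ)ⱼ - (u^c g)ⱼ`. As `fⱼ^{c!/(c-j)} ∈ K ⊆ m^o` means
`ord fⱼ ≥ o(c-j)/c!`, descending induction on `j` together with `o ≤ c!·d` gives
`ord f̃ⱼ ≥ o(c-j)/c!`, i.e. `f̃ⱼ^{c!/(c-j)} ∈ m^o`. Powers of `m` and orders are related by
`m^k = {φ | ord φ ≥ k}`, which is where the finiteness of the set of variables enters, and by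
additivity of the order.
-/

theorem Nat.mul_ceilDiv_mul_right {a b r : ℕ} (hr : 0 < r) : a * r ⌈/⌉ (b * r) = a ⌈/⌉ b := by
  obtain rfl | hb := b.eq_zero_or_pos
  · simp
  refine le_antisymm ((ceilDiv_le_iff_le_mul (Nat.mul_pos hb hr)).2 ?_)
    ((ceilDiv_le_iff_le_mul hb).2 (Nat.le_of_mul_le_mul_right ?_ hr))
  · calc a * r ≤ b * (a ⌈/⌉ b) * r := Nat.mul_le_mul_right r (le_smul_ceilDiv hb)
      _ = b * r * (a ⌈/⌉ b) := by ring
  · calc a * r ≤ b * r * (a * r ⌈/⌉ (b * r)) := le_smul_ceilDiv (Nat.mul_pos hb hr)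
      _ = b * (a * r ⌈/⌉ (b * r)) * r := by ring

theorem le_idealOrd {A : Type*} [CommRing A] {I J : Ideal A} {k : ℕ} (h : J ≤ I ^ k) :
    (k : ℕ∞) ≤ idealOrd I J :=
  le_sSup ⟨k, h, rfl⟩

theorem idealOrd_le_idealOrd {A : Type*} [CommRing A] {I J J' : Ideal A} {B : ℕ∞}
    (hB : idealOrd I J ≤ B) (h : ∀ k : ℕ, (k : ℕ∞) ≤ B → J ≤ I ^ k → J' ≤ I ^ k) :
    idealOrd I J ≤ idealOrd I J' :=
  sSup_le <| by
    rintro _ ⟨k, hk, rfl⟩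
    exact le_idealOrd (h k ((le_idealOrd hk).trans hB) hk)

namespace MvPowerSeries

variable {σ R : Type*}

theorem order_pow [Semiring R] [NoZeroDivisors R] [Nontrivial R] (f : MvPowerSeries σ R) (n : ℕ) :
    (f ^ n).order = n • f.order := by
  induction n with
  | zero => simpa using order_le (f := (1 : MvPowerSeries σ R)) (d := 0) (by simp)
  | succ n ih => rw [pow_succ, order_mul, ih, succ_nsmul]

section OrderIdeal

variable [CommSemiring R]

def orderIdeal (k : ℕ) : Ideal (MvPowerSeries σ R) where
  carrier := {f | (k : ℕ∞) ≤ f.order}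
  add_mem' ha hb := (le_min ha hb).trans min_order_le_add
  zero_mem' := by simp
  smul_mem' a _ hf := hf.trans (le_add_self.trans le_order_mul)

theorem mem_orderIdeal {k : ℕ} {f : MvPowerSeries σ R} :
    f ∈ orderIdeal k ↔ (k : ℕ∞) ≤ f.order := Iff.rfl

theorem orderIdeal_antitone : Antitone (orderIdeal (σ := σ) (R := R)) :=
  fun _ _ h _ hf => mem_orderIdeal.2 ((Nat.cast_le.2 h).trans hf)

theorem X_mem_orderIdeal_one (i : σ) : X i ∈ orderIdeal (R := R) 1 :=
  one_le_order_iff_constCoeff_eq_zero.2 (constantCoeff_X i)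

theorem orderIdeal_mul_le (a b : ℕ) :
    orderIdeal (σ := σ) (R := R) a * orderIdeal b ≤ orderIdeal (a + b) :=
  Ideal.mul_le.2 fun _ hf _ hg => by
    rw [mem_orderIdeal, Nat.cast_add]
    exact (add_le_add hf hg).trans le_order_mul

theorem orderIdeal_one_pow_le (k : ℕ) :
    orderIdeal (σ := σ) (R := R) 1 ^ k ≤ orderIdeal k := by
  induction k with
  | zero => intro f _; simp [mem_orderIdeal]
  | succ k ih => exact (Ideal.mul_mono_left ih).trans (orderIdeal_mul_le k 1)

open Classical in
/-- The monomials `X^e` of `f` whose least variable is `X i`, divided by `X i`. -/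
def divXLeast [LinearOrder σ] (f : MvPowerSeries σ R) (i : σ) : MvPowerSeries σ R :=
  fun e => if (e + Finsupp.single i 1).support.min = (i : WithTop σ)
    then coeff (e + Finsupp.single i 1) f else 0

theorem coeff_divXLeast [LinearOrder σ] (f : MvPowerSeries σ R) (i : σ) (e : σ →₀ ℕ) :
    coeff e (divXLeast f i) = if (e + Finsupp.single i 1).support.min = (i : WithTop σ)
      then coeff (e + Finsupp.single i 1) f else 0 := by
  classical
  rw [coeff_apply]; rfl

theorem divXLeast_mem_orderIdeal [LinearOrder σ] {k : ℕ} {f : MvPowerSeries σ R}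
    (hf : f ∈ orderIdeal (k + 1)) (i : σ) : divXLeast f i ∈ orderIdeal k := by
  refine nat_le_order fun e he => ?_
  rw [coeff_divXLeast]
  split_ifs
  · refine coeff_of_lt_order (lt_of_lt_of_le ?_ hf)
    rw [map_add, Finsupp.degree_single]
    exact_mod_cast Nat.add_lt_add_right he 1
  · rfl

theorem eq_sum_X_mul_divXLeast [Fintype σ] [LinearOrder σ] {f : MvPowerSeries σ R}
    (hf : f ∈ orderIdeal 1) : f = ∑ i, X i * divXLeast f i := by
  classical
  ext e
  have hterm (i : σ) : coeff e (X i * divXLeast f i) =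
      if e.support.min = (i : WithTop σ) then coeff e f else 0 := by
    rw [X, coeff_monomial_mul, coeff_divXLeast]
    by_cases hi : Finsupp.single i 1 ≤ e
    · rw [if_pos hi, tsub_add_cancel_of_le hi, one_mul]
    · rw [if_neg hi, if_neg]
      exact fun hmin => hi (Finsupp.single_le_iff.2
        (Nat.one_le_iff_ne_zero.2 (Finsupp.mem_support_iff.1 (Finset.mem_of_min hmin))))
  rw [map_sum, Finset.sum_congr rfl fun i _ => hterm i]
  rcases e.support.eq_empty_or_nonempty with he | he
  · obtain rfl := Finsupp.support_eq_empty.1 he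
    simp [one_le_order_iff_constCoeff_eq_zero.1 hf]
  · simp [← Finset.coe_min' he]

theorem orderIdeal_succ_le [Fintype σ] [LinearOrder σ] (k : ℕ) :
    orderIdeal (σ := σ) (R := R) (k + 1) ≤ orderIdeal 1 * orderIdeal k := fun f hf => by
  rw [eq_sum_X_mul_divXLeast (orderIdeal_antitone (Nat.le_add_left 1 k) hf)]
  exact Ideal.sum_mem _ fun i _ =>
    Ideal.mul_mem_mul (X_mem_orderIdeal_one i) (divXLeast_mem_orderIdeal hf i)

theorem orderIdeal_one_pow [Finite σ] (k : ℕ) :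
    orderIdeal (σ := σ) (R := R) 1 ^ k = orderIdeal k := by
  have := Fintype.ofFinite σ
  let := LinearOrder.lift' _ (Fintype.equivFin σ).injective
  refine le_antisymm (orderIdeal_one_pow_le k) ?_
  induction k with
  | zero => simp
  | succ k ih =>
    exact (orderIdeal_succ_le k).trans ((Ideal.mul_mono_right ih).trans_eq (pow_succ' _ _).symm)

end OrderIdeal

section Field

variable {K : Type*} [Field K]

theorem maximalIdeal_eq_orderIdeal_one :
    IsLocalRing.maximalIdeal (MvPowerSeries σ K) = orderIdeal 1 := by
  ext f
  rw [IsLocalRing.mem_maximalIdeal, mem_nonunits_iff, isUnit_iff_constantCoeff, isUnit_iff_ne_zero,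
    not_not, mem_orderIdeal, Nat.cast_one, one_le_order_iff_constCoeff_eq_zero]

theorem mem_maximalIdeal_pow_iff [Finite σ] {k : ℕ} {f : MvPowerSeries σ K} :
    f ∈ IsLocalRing.maximalIdeal _ ^ k ↔ (k : ℕ∞) ≤ f.order := by
  rw [maximalIdeal_eq_orderIdeal_one, orderIdeal_one_pow, mem_orderIdeal]

theorem mem_maximalIdeal_pow_ceilDiv_of_pow_mem [Finite σ] {f : MvPowerSeries σ K} {e o : ℕ}
    (he : 0 < e) (hf : f ^ e ∈ IsLocalRing.maximalIdeal _ ^ o) :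
    f ∈ IsLocalRing.maximalIdeal _ ^ (o ⌈/⌉ e) := by
  rw [mem_maximalIdeal_pow_iff, order_pow] at *
  cases h : f.order using ENat.recTopCoe with
  | top => exact le_top
  | coe s =>
    rw [h, nsmul_eq_mul, ← Nat.cast_mul, Nat.cast_le] at hf
    exact Nat.cast_le.2 ((ceilDiv_le_iff_le_mul he).2 hf)

end Field

end MvPowerSeries

theorem MvPolynomial.IsHomogeneous.le_order_coe {σ R : Type*} [CommSemiring R]
    {q : MvPolynomial σ R} {d : ℕ} (hq : q.IsHomogeneous d) :
    (d : ℕ∞) ≤ (q : MvPowerSeries σ R).order :=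
  MvPowerSeries.nat_le_order fun e he => by
    rw [MvPolynomial.coeff_coe]
    by_contra h
    exact he.ne (by rw [Finsupp.degree_eq_weight_one]; exact hq h)

namespace PowerSeries

variable {A : Type*} [CommRing A]

theorem coeff_X_sub_C_pow_mul_mem {I : Ideal A} {a : A} (ha : a ∈ I) (i j : ℕ) (g : A⟦X⟧) :
    coeff j ((X - C a) ^ i * g) ∈ I ^ (i - j) := by
  induction i generalizing j with
  | zero => simp
  | succ i ih =>
    rw [pow_succ', mul_assoc, sub_mul, map_sub, coeff_C_mul]
    refine sub_mem ?_ (Ideal.pow_le_pow_right (show i + 1 - j ≤ i - j + 1 by omega) ?_)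
    · rcases j with _ | j
      · simp
      · simpa using ih j
    · exact pow_succ' I (i - j) ▸ Ideal.mul_mem_mul ha (ih j)

theorem coeff_X_sub_C_pow_self (a : A) (i : ℕ) : coeff i ((X - C a) ^ i) = 1 := by
  nontriviality A
  rw [← Polynomial.coe_X, ← Polynomial.coe_C, ← Polynomial.coe_sub, ← Polynomial.coe_pow,
    Polynomial.coeff_coe]
  simpa [(Polynomial.monic_X_sub_C a).natDegree_pow] using
    ((Polynomial.monic_X_sub_C a).pow i).coeff_natDegree

theorem coeff_X_sub_C_pow_of_lt (a : A) {i j : ℕ} (h : i < j) : coeff j ((X - C a) ^ i) = 0 := by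
  rw [← Polynomial.coe_X, ← Polynomial.coe_C, ← Polynomial.coe_sub, ← Polynomial.coe_pow,
    Polynomial.coeff_coe]
  refine Polynomial.coeff_eq_zero_of_natDegree_lt (lt_of_le_of_lt ?_ h)
  simpa using Polynomial.natDegree_pow_le_of_le i (Polynomial.natDegree_X_sub_C_le a)

open Finset

theorem coeff_sum_C_mul_X_sub_C_pow (a : A) (E : ℕ → A) {j c : ℕ} (hj : j < c) :
    coeff j (∑ i ∈ range c, C (E i) * (X - C a) ^ i) =
      E j + ∑ i ∈ Ioo j c, E i * coeff j ((X - C a) ^ i) := by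
  simp only [map_sum, coeff_C_mul, range_eq_Ico]
  rw [← sum_Ico_consecutive _ (Nat.zero_le j) hj.le, sum_eq_sum_Ico_succ_bot hj,
    coeff_X_sub_C_pow_self, mul_one, Ico_add_one_left_eq_Ioo, sum_eq_zero, zero_add]
  intro i hi
  rw [coeff_X_sub_C_pow_of_lt a (mem_Ico.1 hi).2, mul_zero]

theorem mem_pow_of_eq_sum_C_mul_X_sub_C_pow {𝔪 : Ideal A} {a : A} {d s o c : ℕ}
    (ha : a ∈ 𝔪 ^ d) (hs : 0 < s) (ho : o ≤ s * d) {f g : A⟦X⟧} {E : ℕ → A}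
    (hf : f = ∑ i ∈ range c, C (E i) * (X - C a) ^ i + (X - C a) ^ c * g)
    (hcoeff : ∀ j < c, coeff j f ∈ 𝔪 ^ (o * (c - j) ⌈/⌉ s)) :
    ∀ j < c, E j ∈ 𝔪 ^ (o * (c - j) ⌈/⌉ s) := by
  intro j hj
  induction hcj : c - j using Nat.strong_induction_on generalizing j with
  | _ k ih =>
    subst hcj
    have hEj : E j = coeff j f - coeff j ((X - C a) ^ c * g) -
        ∑ i ∈ Ioo j c, E i * coeff j ((X - C a) ^ i) := by
      rw [hf, map_add, coeff_sum_C_mul_X_sub_C_pow a E hj]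
      ring
    have hd_pow (i : ℕ) (h : A⟦X⟧) : coeff j ((X - C a) ^ i * h) ∈ 𝔪 ^ (d * (i - j)) := by
      rw [pow_mul]; exact coeff_X_sub_C_pow_mul_mem ha i j h
    rw [hEj]
    refine sub_mem (sub_mem (hcoeff j hj) (Ideal.pow_le_pow_right ?_ (hd_pow c g)))
      (Ideal.sum_mem _ fun i hi =>
        Ideal.pow_le_pow_right (n := o * (c - i) ⌈/⌉ s + d * (i - j)) ?_ ?_)
    · rw [ceilDiv_le_iff_le_mul hs]
      calc o * (c - j) ≤ s * d * (c - j) := Nat.mul_le_mul_right _ ho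
        _ = s * (d * (c - j)) := mul_assoc _ _ _
    · obtain ⟨hji, hic⟩ := mem_Ioo.1 hi
      rw [ceilDiv_le_iff_le_mul hs, mul_add]
      calc o * (c - j) = o * (c - i) + o * (i - j) := by rw [← mul_add]; congr 1; omega
        _ ≤ s * (o * (c - i) ⌈/⌉ s) + s * d * (i - j) :=
          add_le_add (le_smul_ceilDiv hs) (Nat.mul_le_mul_right _ ho)
        _ = s * (o * (c - i) ⌈/⌉ s) + s * (d * (i - j)) := by rw [mul_assoc]
    · obtain ⟨hji, hic⟩ := mem_Ioo.1 hi
      rw [pow_add]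
      exact Ideal.mul_mem_mul (ih (c - i) (by omega) i hic rfl) (by simpa using hd_pow i 1)

end PowerSeries

section CoefficientIdeals

open Finset PowerSeries

variable {𝕂 : Type*} [Field 𝕂] {n : ℕ}

theorem pow_coeff_mem_coeffIdeal {J : Ideal (PowerSeries (MvPowerSeries (Fin n) 𝕂))} {c j : ℕ}
    {f : PowerSeries (MvPowerSeries (Fin n) 𝕂)} (hf : f ∈ J) (hj : j < c) :
    coeff j f ^ (c.factorial / (c - j)) ∈ coeffIdeal J c := by
  have hmem : coeff j f ^ (c.factorial / (c - j)) ∈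
      Ideal.span ((coeff j) '' J) ^ (c.factorial / (c - j)) :=
    Ideal.pow_mem_pow (Ideal.subset_span (Set.mem_image_of_mem _ hf)) _
  rw [coeffIdeal, Ideal.sum_eq_sup]
  exact le_sup (f := fun i => Ideal.span ((coeff (R := MvPowerSeries (Fin n) 𝕂) i) '' J) ^
    (c.factorial / (c - i))) (mem_range.2 hj) hmem

theorem coeffIdealE_le_pow {I : Ideal (MvPowerSeries (Fin n) 𝕂)}
    {E : PowerSeries (MvPowerSeries (Fin n) 𝕂) → ℕ → MvPowerSeries (Fin n) 𝕂}
    {J : Ideal (PowerSeries (MvPowerSeries (Fin n) 𝕂))} {c o : ℕ} {w : ℕ → ℕ}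
    (hE : ∀ f ∈ J, ∀ j < c, E f j ∈ I ^ w j) (hw : ∀ j < c, o ≤ w j * (c.factorial / (c - j))) :
    coeffIdealE E J c ≤ I ^ o := by
  rw [coeffIdealE, Ideal.sum_eq_sup]
  refine Finset.sup_le fun j hj => ?_
  have hspan : Ideal.span ((fun f => E f j) '' J) ≤ I ^ w j := Ideal.span_le.2 <| by
    rintro _ ⟨f, hf, rfl⟩
    exact hE f hf j (mem_range.1 hj)
  calc Ideal.span ((fun f => E f j) '' J) ^ (c.factorial / (c - j))
      ≤ (I ^ w j) ^ (c.factorial / (c - j)) := Ideal.pow_right_mono hspan _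
    _ ≤ I ^ o := by rw [← pow_mul]; exact Ideal.pow_le_pow_right (hw j (mem_range.1 hj))

theorem coeffIdealE_le_of_coeffIdeal_le {a : MvPowerSeries (Fin n) 𝕂} {d o c : ℕ}
    (ha : a ∈ IsLocalRing.maximalIdeal _ ^ d) (ho : o ≤ c.factorial * d)
    {J : Ideal (PowerSeries (MvPowerSeries (Fin n) 𝕂))}
    {E : PowerSeries (MvPowerSeries (Fin n) 𝕂) → ℕ → MvPowerSeries (Fin n) 𝕂}
    (hE : ∀ f, f - ∑ i ∈ range c, C (E f i) * (X - C a) ^ i ∈ Ideal.span {(X - C a) ^ c})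
    (hK : coeffIdeal J c ≤ IsLocalRing.maximalIdeal _ ^ o) :
    coeffIdealE E J c ≤ IsLocalRing.maximalIdeal _ ^ o := by
  have he {j : ℕ} (hj : j < c) : 0 < c.factorial / (c - j) :=
    Nat.div_pos ((Nat.sub_le c j).trans c.self_le_factorial) (by omega)
  have hw {j : ℕ} (hj : j < c) : o * (c - j) ⌈/⌉ c.factorial = o ⌈/⌉ (c.factorial / (c - j)) := by
    conv_lhs => rw [← Nat.div_mul_cancel (Nat.dvd_factorial (by omega) (Nat.sub_le c j))]
    exact Nat.mul_ceilDiv_mul_right (by omega)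
  refine coeffIdealE_le_pow (w := fun j => o * (c - j) ⌈/⌉ c.factorial) (fun f hf => ?_)
    fun j hj => ?_
  · obtain ⟨g, hg⟩ := Ideal.mem_span_singleton.1 (hE f)
    refine mem_pow_of_eq_sum_C_mul_X_sub_C_pow ha c.factorial_pos ho (f := f) (g := g)
      (by rw [← hg]; ring) fun j hj => ?_
    rw [hw hj]
    exact MvPowerSeries.mem_maximalIdeal_pow_ceilDiv_of_pow_mem (he hj)
      (hK (pow_coeff_mem_coeffIdeal hf hj))
  · rw [hw hj, mul_comm]
    exact le_smul_ceilDiv (he hj)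

end CoefficientIdeals

theorem order_coeff_ideal_after_translation_ge_general {𝕂 : Type*} [Field 𝕂] {n : ℕ}
    (q : MvPolynomial (Fin n) 𝕂) (d : ℕ) (hqd : q.IsHomogeneous d)
    (u : PowerSeries (MvPowerSeries (Fin n) 𝕂))
    (hu : u = PowerSeries.X -
      PowerSeries.C (R := MvPowerSeries (Fin n) 𝕂) (↑q : MvPowerSeries (Fin n) 𝕂))
    (J : Ideal (PowerSeries (MvPowerSeries (Fin n) 𝕂))) (c : ℕ)
    (E : PowerSeries (MvPowerSeries (Fin n) 𝕂) → ℕ → MvPowerSeries (Fin n) 𝕂)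
    (hE : ∀ f : PowerSeries (MvPowerSeries (Fin n) 𝕂), ∀ N : ℕ,
      f - ∑ i ∈ Finset.range N, PowerSeries.C (R := MvPowerSeries (Fin n) 𝕂) (E f i) * u ^ i
        ∈ Ideal.span {u ^ N})
    (hdeg : ((c.factorial * d : ℕ) : ℕ∞)
      ≥ idealOrd (IsLocalRing.maximalIdeal (MvPowerSeries (Fin n) 𝕂)) (coeffIdeal J c)) :
    idealOrd (IsLocalRing.maximalIdeal (MvPowerSeries (Fin n) 𝕂)) (coeffIdealE E J c)
      ≥ idealOrd (IsLocalRing.maximalIdeal (MvPowerSeries (Fin n) 𝕂)) (coeffIdeal J c) := by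
  subst hu
  have hq : (q : MvPowerSeries (Fin n) 𝕂) ∈ IsLocalRing.maximalIdeal _ ^ d :=
    MvPowerSeries.mem_maximalIdeal_pow_iff.2 hqd.le_order_coe
  exact idealOrd_le_idealOrd hdeg fun o ho hK =>
    coeffIdealE_le_of_coeffIdeal_le hq (by exact_mod_cast ho) (fun f => hE f c) hK

/-- Coordinate change `u = z − q`, `q` a nonzero homogeneous polynomial of positive degree:
if `c!·deg q ≥ o`, then `o₁ ≥ o`, where `o = ord coeff_{V(z)}(J)` and
`o₁ = ord coeff_{V(u)}(J)` for an ideal `J ⊆ 𝕂[[z,x₁,…,xₙ]]` of order `c`, `1 ≤ c < ∞`. -/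
theorem order_coeff_ideal_after_translation_ge {𝕂 : Type*} [Field 𝕂] (p : ℕ)
    (hp : p.Prime) [CharP 𝕂 p] {n : ℕ}
    (q : MvPolynomial (Fin n) 𝕂) (d : ℕ) (hq0 : q ≠ 0) (hqd : q.IsHomogeneous d) (hd : 1 ≤ d)
    (u : PowerSeries (MvPowerSeries (Fin n) 𝕂))
    (hu : u = PowerSeries.X -
      PowerSeries.C (R := MvPowerSeries (Fin n) 𝕂) (↑q : MvPowerSeries (Fin n) 𝕂))
    (J : Ideal (PowerSeries (MvPowerSeries (Fin n) 𝕂))) (c : ℕ) (hc1 : 1 ≤ c)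
    (hc : idealOrd (IsLocalRing.maximalIdeal (PowerSeries (MvPowerSeries (Fin n) 𝕂))) J
      = (c : ℕ∞))
    (E : PowerSeries (MvPowerSeries (Fin n) 𝕂) → ℕ → MvPowerSeries (Fin n) 𝕂)
    (hE : ∀ f : PowerSeries (MvPowerSeries (Fin n) 𝕂), ∀ N : ℕ,
      f - ∑ i ∈ Finset.range N, PowerSeries.C (R := MvPowerSeries (Fin n) 𝕂) (E f i) * u ^ i
        ∈ Ideal.span {u ^ N})
    (hdeg : ((c.factorial * d : ℕ) : ℕ∞)
      ≥ idealOrd (IsLocalRing.maximalIdeal (MvPowerSeries (Fin n) 𝕂)) (coeffIdeal J c)) :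
    idealOrd (IsLocalRing.maximalIdeal (MvPowerSeries (Fin n) 𝕂)) (coeffIdealE E J c)
      ≥ idealOrd (IsLocalRing.maximalIdeal (MvPowerSeries (Fin n) 𝕂)) (coeffIdeal J c) :=
  order_coeff_ideal_after_translation_ge_general q d hqd u hu J c E hE hdeg
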